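/- arXiv:2210.01864 — 6 statements merged into one kernel-verified Lean document; each statement's English description precedes it below -/
import Mathlib

section
/- Let 𝒫 and 𝒬 be probability measures on a measurable space Ω and let g : Ω → [−1, 1] be measurable. Then |E_{x∼𝒫}[g(x)] − E_{x∼𝒬}[g(x)]| ≤ √(e^{D_2(𝒫‖𝒬)} − 1). -/
open MeasureTheory ProbabilityTheory

open Classical in
/-- The Rényi divergence of order `a` between two measures:
`D_a(P‖Q) = (1/(a−1)) · log ∫ (dP/dQ)^a dQ` if `P ≪ Q`, and `∞` otherwise. -/
noncomputable def renyiDiv {Ω : Type*} [MeasurableSpace Ω] (a : ℝ)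
    (P Q : Measure Ω) : EReal :=
  if P ≪ Q then (((a - 1)⁻¹ : ℝ) : EReal) * ENNReal.log (∫⁻ x, P.rnDeriv Q x ^ a ∂Q)
  else ⊤

/-!
Writing `f = dP/dQ`, the difference of expectations is `∫ (f - 1) g dQ`, which for `|g| ≤ 1` is
at most `‖f - 1‖_{L¹(Q)} ≤ ‖f - 1‖_{L²(Q)}`. Since `∫ f dQ = 1`, expanding the square gives
`‖f - 1‖²_{L²(Q)} = ∫ f² dQ - 1 = e^{D₂(P‖Q)} - 1`, the `χ²`-divergence.
-/

open scoped ENNReal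

lemma ENNReal.sq_add_one_eq_enorm_toReal_sub_one_sq_add_two_mul {r : ℝ≥0∞} (hr : r ≠ ⊤) :
    r ^ 2 + 1 = ‖r.toReal - 1‖ₑ ^ 2 + 2 * r := by
  lift r to NNReal using hr
  rw [Real.enorm_eq_ofReal_abs, ← ENNReal.ofReal_pow (abs_nonneg _), sq_abs,
    ← ENNReal.ofReal_coe_nnreal, ← ENNReal.ofReal_pow r.coe_nonneg, ← ENNReal.ofReal_one,
    ← ENNReal.ofReal_add (by positivity) zero_le_one, ENNReal.toReal_ofReal r.coe_nonneg,
    ← ENNReal.ofReal_ofNat 2, ← ENNReal.ofReal_mul zero_le_two,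
    ← ENNReal.ofReal_add (sq_nonneg _) (by positivity)]
  congr 1
  ring

section

variable {Ω : Type*} [MeasurableSpace Ω] {P Q : Measure Ω}

lemma integral_sub_integral_eq_integral_toReal_rnDeriv_sub_one_mul
    [SigmaFinite P] [P.HaveLebesgueDecomposition Q] (hPQ : P ≪ Q) {g : Ω → ℝ}
    (hgP : Integrable g P) (hgQ : Integrable g Q) :
    ∫ x, g x ∂P - ∫ x, g x ∂Q = ∫ x, ((P.rnDeriv Q x).toReal - 1) * g x ∂Q := by
  have hfgQ : Integrable (fun x => (P.rnDeriv Q x).toReal • g x) Q :=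
    (integrable_rnDeriv_smul_iff hPQ).mpr hgP
  rw [← integral_rnDeriv_smul hPQ, ← integral_sub hfgQ hgQ]
  simp only [smul_eq_mul, sub_mul, one_mul]

lemma enorm_integral_mul_le_lintegral_enorm_rpow_two {μ : Measure Ω} [IsProbabilityMeasure μ]
    {h g : Ω → ℝ} (hh : AEStronglyMeasurable h μ) (hg : ∀ᵐ x ∂μ, ‖g x‖ ≤ 1) :
    ‖∫ x, h x * g x ∂μ‖ₑ ≤ (∫⁻ x, ‖h x‖ₑ ^ (2 : ℝ) ∂μ) ^ ((1 : ℝ) / 2) := calc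
  _ ≤ ∫⁻ x, ‖h x * g x‖ₑ ∂μ := enorm_integral_le_lintegral_enorm _
  _ ≤ ∫⁻ x, ‖h x‖ₑ ∂μ := lintegral_mono_ae <| hg.mono fun x hx => by
    rw [enorm_mul, ← ofReal_norm (g x)]
    exact mul_le_of_le_one_right' (ENNReal.ofReal_le_one.mpr hx)
  _ = eLpNorm h 1 μ := eLpNorm_one_eq_lintegral_enorm.symm
  _ ≤ eLpNorm h 2 μ := eLpNorm_le_eLpNorm_of_exponent_le one_le_two hh
  _ = _ := by simp [eLpNorm_eq_lintegral_rpow_enorm_toReal]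

lemma lintegral_enorm_toReal_rnDeriv_sub_one_rpow_two
    [IsProbabilityMeasure P] [IsProbabilityMeasure Q] (hPQ : P ≪ Q) :
    ∫⁻ x, ‖(P.rnDeriv Q x).toReal - 1‖ₑ ^ (2 : ℝ) ∂Q = ∫⁻ x, P.rnDeriv Q x ^ (2 : ℝ) ∂Q - 1 := by
  simp only [ENNReal.rpow_two]
  have hr := Measure.measurable_rnDeriv P Q
  have hsum : ∫⁻ x, P.rnDeriv Q x ^ 2 ∂Q + 1
      = ∫⁻ x, ‖(P.rnDeriv Q x).toReal - 1‖ₑ ^ 2 ∂Q + 1 + 1 := calc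
    _ = ∫⁻ x, (P.rnDeriv Q x ^ 2 + 1) ∂Q := by
      rw [lintegral_add_right _ measurable_const, lintegral_const, measure_univ, one_mul]
    _ = ∫⁻ x, (‖(P.rnDeriv Q x).toReal - 1‖ₑ ^ 2 + 2 * P.rnDeriv Q x) ∂Q :=
      lintegral_congr_ae <| (Measure.rnDeriv_lt_top P Q).mono fun x hx =>
        ENNReal.sq_add_one_eq_enorm_toReal_sub_one_sq_add_two_mul hx.ne
    _ = _ := by
      rw [lintegral_add_right _ (hr.const_mul 2), lintegral_const_mul _ hr,
        Measure.lintegral_rnDeriv hPQ, measure_univ, add_assoc, one_add_one_eq_two, mul_one]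
  exact ENNReal.eq_sub_of_add_eq ENNReal.one_ne_top
    ((ENNReal.add_left_inj ENNReal.one_ne_top).mp hsum).symm

lemma exp_renyiDiv_two (hPQ : P ≪ Q) :
    EReal.exp (renyiDiv 2 P Q) = ∫⁻ x, P.rnDeriv Q x ^ (2 : ℝ) ∂Q := by
  rw [renyiDiv, if_pos hPQ]
  norm_num [ENNReal.exp_log]

end

/-- **Closeness in order-2 Rényi divergence implies closeness of expectations.**
If `𝒫, 𝒬` are probability measures on `Ω` and `g : Ω → [−1,1]` is measurable, then
`|E_{x∼𝒫}[g(x)] − E_{x∼𝒬}[g(x)]| ≤ √(e^{D₂(𝒫‖𝒬)} − 1)`. -/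
theorem abs_integral_sub_le_sqrt_exp_renyiDiv_two_sub_one
    {Ω : Type*} [MeasurableSpace Ω] (P Q : Measure Ω)
    [IsProbabilityMeasure P] [IsProbabilityMeasure Q]
    (g : Ω → ℝ) (hg : Measurable g) (hg1 : ∀ x, g x ∈ Set.Icc (-1 : ℝ) 1) :
    ENNReal.ofReal |∫ x, g x ∂P - ∫ x, g x ∂Q|
      ≤ (EReal.exp (renyiDiv 2 P Q) - 1) ^ ((1 : ℝ) / 2) := by
  by_cases hPQ : P ≪ Q
  swap
  · simp [renyiDiv, hPQ]
  have hg_le : ∀ x, ‖g x‖ ≤ 1 := fun x => abs_le.mpr (hg1 x)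
  have hg_int {μ : Measure Ω} [IsFiniteMeasure μ] : Integrable g μ :=
    .of_bound hg.aestronglyMeasurable 1 (.of_forall hg_le)
  rw [← Real.enorm_eq_ofReal_abs,
    integral_sub_integral_eq_integral_toReal_rnDeriv_sub_one_mul hPQ hg_int hg_int,
    exp_renyiDiv_two hPQ, ← lintegral_enorm_toReal_rnDeriv_sub_one_rpow_two hPQ]
  exact enorm_integral_mul_le_lintegral_enorm_rpow_two
    ((Measure.measurable_rnDeriv P Q).ennreal_toReal.sub_const 1).aestronglyMeasurable
    (.of_forall hg_le)
end

section
/- Let L : ℝ^p → ℝ be 1-strongly convex with (unique) global minimizer θ*, and let μ be the probability measure on ℝ^p whose density with respect to Lebesgue measure is proportional to exp(−L(θ)). Then for every x ≥ 0, μ({θ : ‖θ − θ*‖₂ > √p + x}) ≤ exp(−x²/2). -/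
/-!
Strong convexity along the segment from `θ*` to `θ* + c • u`, `c ≥ 1`, gives
`L (θ* + u) + (c² - 1)/2 ‖u‖² ≤ L (θ* + c • u)`. Hence the change of variables
`θ = θ* + c • u`, of Jacobian `c^p`, bounds the exponential moment
`∫ exp ((1 - c⁻²)/2 ‖θ - θ*‖²) dμ ≤ c^p`, and Chernoff's inequality at radius `t = √p + x`
gives `μ (t ≤ ‖θ - θ*‖) ≤ c^p exp (-(1 - c⁻²) t²/2)`. For `c = t/√p` the exponent is
`-(t² - p)/2`, and `c^p ≤ exp (√p x)` turns the bound into `exp (-x²/2)`.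
-/

open MeasureTheory Real
open scoped ENNReal Topology
open Set Filter Module

namespace StrongConvexOn

variable {E : Type*} [NormedAddCommGroup E] [NormedSpace ℝ E] {f : E → ℝ} {m : ℝ} {x₀ : E}

lemma add_sq_norm_le_apply_add (hf : StrongConvexOn univ m f) (hmin : ∀ x, f x₀ ≤ f x) (v : E) :
    f x₀ + m / 2 * ‖v‖ ^ 2 ≤ f (x₀ + v) := by
  set q := m / 2 * ‖v‖ ^ 2 with hq
  have hseg : ∀ l ∈ Ioo (0 : ℝ) 1, f x₀ + q - l * q ≤ f (x₀ + v) := by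
    rintro l ⟨hl0, hl1⟩
    have h := hf.2 (mem_univ (x₀ + v)) (mem_univ x₀) hl0.le (sub_nonneg.2 hl1.le)
      (add_sub_cancel l 1)
    rw [show l • (x₀ + v) + (1 - l) • x₀ = x₀ + l • v by module, add_sub_cancel_left,
      smul_eq_mul, smul_eq_mul] at h
    beta_reduce at h
    rw [← hq] at h
    refine le_of_mul_le_mul_left ?_ hl0
    linarith [hmin (x₀ + l • v)]
  have hlim : Tendsto (fun l : ℝ => f x₀ + q - l * q) (𝓝[>] 0) (𝓝 (f x₀ + q)) := by
    refine tendsto_nhdsWithin_of_tendsto_nhds ?_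
    exact (by fun_prop : Continuous fun l : ℝ => f x₀ + q - l * q).tendsto' 0 _ (by simp)
  exact le_of_tendsto hlim (eventually_of_mem (Ioo_mem_nhdsGT one_pos) hseg)

lemma apply_add_add_le_apply_add_smul (hf : StrongConvexOn univ m f) (hmin : ∀ x, f x₀ ≤ f x)
    {c : ℝ} (hc : 1 ≤ c) (v : E) :
    f (x₀ + v) + m / 2 * (c ^ 2 - 1) * ‖v‖ ^ 2 ≤ f (x₀ + c • v) := by
  have hc0 : 0 < c := one_pos.trans_le hc
  have h := hf.2 (mem_univ (x₀ + c • v)) (mem_univ x₀) (inv_nonneg.2 hc0.le)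
    (sub_nonneg.2 (inv_le_one_of_one_le₀ hc)) (add_sub_cancel c⁻¹ 1)
  rw [smul_add, inv_smul_smul₀ hc0.ne', show c⁻¹ • x₀ + v + (1 - c⁻¹) • x₀ = x₀ + v by module,
    add_sub_cancel_left, norm_smul, norm_of_nonneg hc0.le, smul_eq_mul, smul_eq_mul] at h
  beta_reduce at h
  have hcleared : c * f (x₀ + v) ≤
      f (x₀ + c • v) + (c - 1) * f x₀ - (c - 1) * c * (m / 2 * ‖v‖ ^ 2) := by
    calc c * f (x₀ + v)
        ≤ c * (c⁻¹ * f (x₀ + c • v) + (1 - c⁻¹) * f x₀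
            - c⁻¹ * (1 - c⁻¹) * (m / 2 * (c * ‖v‖) ^ 2)) := mul_le_mul_of_nonneg_left h hc0.le
      _ = _ := by field_simp
  linarith [mul_le_mul_of_nonneg_left (hf.add_sq_norm_le_apply_add hmin v) (sub_nonneg.2 hc)]

end StrongConvexOn

section HaarMeasure

variable {E : Type*} [NormedAddCommGroup E] [NormedSpace ℝ E] [FiniteDimensional ℝ E]
  [MeasurableSpace E] [BorelSpace E] (μ : Measure E) [μ.IsAddHaarMeasure]

lemma lintegral_eq_mul_lintegral_comp_smul (g : E → ℝ≥0∞) {c : ℝ} (hc : 0 < c) :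
    ∫⁻ x, g x ∂μ = ENNReal.ofReal (c ^ finrank ℝ E) * ∫⁻ x, g (c • x) ∂μ := by
  have hcd : 0 < c ^ finrank ℝ E := pow_pos hc _
  have hmap := lintegral_map_equiv g (MeasurableEquiv.smul₀ c hc.ne') (μ := μ)
  rw [MeasurableEquiv.coe_smul₀] at hmap
  rw [← hmap, Measure.map_addHaar_smul μ hc.ne', lintegral_smul_measure, smul_eq_mul, ← mul_assoc,
    abs_of_pos (inv_pos.2 hcd), ← ENNReal.ofReal_mul hcd.le, mul_inv_cancel₀ hcd.ne',
    ENNReal.ofReal_one, one_mul]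

namespace StrongConvexOn

variable {L : E → ℝ} {m : ℝ} {θ₀ : E}

lemma lintegral_exp_sq_norm_sub_le (hL : StrongConvexOn univ m L) (hmin : ∀ θ, L θ₀ ≤ L θ)
    {c : ℝ} (hc : 1 ≤ c) :
    ∫⁻ θ, ENNReal.ofReal (exp (m / 2 * (1 - c⁻¹ ^ 2) * ‖θ - θ₀‖ ^ 2 - L θ)) ∂μ ≤
      ENNReal.ofReal (c ^ finrank ℝ E) * ∫⁻ θ, ENNReal.ofReal (exp (-L θ)) ∂μ := by
  have hc0 : 0 < c := one_pos.trans_le hc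
  rw [← lintegral_add_left_eq_self _ θ₀, lintegral_eq_mul_lintegral_comp_smul μ _ hc0,
    ← lintegral_add_left_eq_self (fun θ => ENNReal.ofReal (exp (-L θ))) θ₀]
  gcongr with u
  have hgrowth := hL.apply_add_add_le_apply_add_smul hmin hc u
  have hsq : (1 - c⁻¹ ^ 2) * ‖c • u‖ ^ 2 = (c ^ 2 - 1) * ‖u‖ ^ 2 := by
    rw [norm_smul, norm_of_nonneg hc0.le]
    field_simp
  rw [add_sub_cancel_left, mul_assoc, hsq]
  linarith

lemma inv_lintegral_mul_setLIntegral_exp_le (hL : StrongConvexOn univ m L)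
    (hmin : ∀ θ, L θ₀ ≤ L θ) (hm : 0 ≤ m) {c : ℝ} (hc : 1 ≤ c) {t : ℝ} (ht : 0 ≤ t) :
    (∫⁻ θ, ENNReal.ofReal (exp (-L θ)) ∂μ)⁻¹ *
        ∫⁻ θ in {θ | t ≤ ‖θ - θ₀‖}, ENNReal.ofReal (exp (-L θ)) ∂μ ≤
      ENNReal.ofReal (c ^ finrank ℝ E * exp (-(m / 2 * (1 - c⁻¹ ^ 2) * t ^ 2))) := by
  set s := m / 2 * (1 - c⁻¹ ^ 2)
  have hs : 0 ≤ s := mul_nonneg (by positivity)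
    (sub_nonneg.2 (pow_le_one₀ (by positivity) (inv_le_one_of_one_le₀ hc)))
  have hA : MeasurableSet {θ | t ≤ ‖θ - θ₀‖} := measurableSet_le measurable_const (by fun_prop)
  have hchernoff : ∀ θ ∈ {θ | t ≤ ‖θ - θ₀‖}, ENNReal.ofReal (exp (-L θ)) ≤
      ENNReal.ofReal (exp (-(s * t ^ 2))) * ENNReal.ofReal (exp (s * ‖θ - θ₀‖ ^ 2 - L θ)) := by
    intro θ hθ
    rw [← ENNReal.ofReal_mul (exp_nonneg _), ← exp_add]
    gcongr
    have : t ^ 2 ≤ ‖θ - θ₀‖ ^ 2 := pow_le_pow_left₀ ht hθ 2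
    nlinarith
  set Z := ∫⁻ θ, ENNReal.ofReal (exp (-L θ)) ∂μ
  calc Z⁻¹ * ∫⁻ θ in {θ | t ≤ ‖θ - θ₀‖}, ENNReal.ofReal (exp (-L θ)) ∂μ
      ≤ Z⁻¹ * ∫⁻ θ, ENNReal.ofReal (exp (-(s * t ^ 2))) *
          ENNReal.ofReal (exp (s * ‖θ - θ₀‖ ^ 2 - L θ)) ∂μ := by
        gcongr Z⁻¹ * ?_
        exact (setLIntegral_mono' hA hchernoff).trans (setLIntegral_le_lintegral _ _)
    _ ≤ Z⁻¹ * (ENNReal.ofReal (exp (-(s * t ^ 2))) * (ENNReal.ofReal (c ^ finrank ℝ E) * Z)) := by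
        rw [lintegral_const_mul' _ _ ENNReal.ofReal_ne_top]
        gcongr
        exact hL.lintegral_exp_sq_norm_sub_le μ hmin hc
    _ = ENNReal.ofReal (c ^ finrank ℝ E * exp (-(s * t ^ 2))) * (Z⁻¹ * Z) := by
        rw [ENNReal.ofReal_mul (by positivity)]
        ring
    _ ≤ ENNReal.ofReal (c ^ finrank ℝ E * exp (-(s * t ^ 2))) :=
        mul_le_of_le_one_right' (ENNReal.inv_mul_le_one Z)

end StrongConvexOn

end HaarMeasure

lemma one_add_div_sqrt_pow_mul_exp_le {d : ℕ} (hd : 0 < d) {x : ℝ} (hx : 0 ≤ x) :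
    (1 + x / √d) ^ d * exp (-(1 / 2 * (1 - (1 + x / √d)⁻¹ ^ 2) * (√d + x) ^ 2)) ≤
      exp (-x ^ 2 / 2) := by
  have hsd : 0 < √(d : ℝ) := sqrt_pos.2 (Nat.cast_pos.2 hd)
  have hsq : √(d : ℝ) ^ 2 = d := sq_sqrt (Nat.cast_nonneg d)
  have hc : (1 + x / √d)⁻¹ * (√d + x) = √d := by field_simp
  have hexponent :
      1 / 2 * (1 - (1 + x / √d)⁻¹ ^ 2) * (√d + x) ^ 2 = ((√d + x) ^ 2 - d) / 2 := by
    linear_combination (-1 / 2) * (((1 + x / √d)⁻¹ * (√d + x) + √d) * hc + hsq)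
  calc (1 + x / √d) ^ d * exp (-(1 / 2 * (1 - (1 + x / √d)⁻¹ ^ 2) * (√d + x) ^ 2))
      ≤ exp (x / √d) ^ d * exp (-(((√d + x) ^ 2 - d) / 2)) := by
        rw [hexponent]
        gcongr
        linarith [add_one_le_exp (x / √d)]
    _ = exp (-x ^ 2 / 2) := by
        have hdx : (d : ℝ) * (x / √d) = √d * x := by
          rw [mul_div_assoc', div_eq_iff hsd.ne']
          linear_combination (-x) * hsq
        rw [← exp_nat_mul, ← exp_add]
        congr 1
        linear_combination hdx - hsq / 2

/-- **Gaussian-type tail bound for a 1-strongly log-concave measure.**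
Let `L : ℝ^p → ℝ` be 1-strongly convex (i.e. `θ ↦ L(θ) − ‖θ‖²/2` is convex) with global
minimizer `θ*`, and let `μ` be the probability measure on `ℝ^p` with density proportional
to `exp(−L(θ))` with respect to Lebesgue measure. Then for every `x ≥ 0`,
`μ({θ : ‖θ − θ*‖₂ > √p + x}) ≤ exp(−x²/2)`. -/
theorem stronglyLogConcave_tail_bound
    {p : ℕ} (L : EuclideanSpace ℝ (Fin p) → ℝ)
    (hsc : ConvexOn ℝ Set.univ fun θ => L θ - ‖θ‖ ^ 2 / 2)
    (θstar : EuclideanSpace ℝ (Fin p)) (hmin : ∀ θ, L θstar ≤ L θ)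
    (μ : Measure (EuclideanSpace ℝ (Fin p)))
    (hμ : μ = (∫⁻ θ, ENNReal.ofReal (Real.exp (-L θ)))⁻¹ •
        volume.withDensity fun θ => ENNReal.ofReal (Real.exp (-L θ)))
    (x : ℝ) (hx : 0 ≤ x) :
    μ {θ | Real.sqrt p + x < ‖θ - θstar‖} ≤ ENNReal.ofReal (Real.exp (-x ^ 2 / 2)) := by
  rcases Nat.eq_zero_or_pos p with rfl | hp
  · have hθ : ∀ θ : EuclideanSpace ℝ (Fin 0), ‖θ - θstar‖ = 0 := fun θ => by
      simp [Subsingleton.elim θ θstar]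
    simp [hθ, not_lt.2 hx]
  have hL : StrongConvexOn univ 1 L := by
    rw [strongConvexOn_iff_convex]
    simpa only [div_eq_inv_mul, mul_one] using hsc
  have hc : 1 ≤ 1 + x / √p := le_add_of_nonneg_right (by positivity)
  have htail := hL.inv_lintegral_mul_setLIntegral_exp_le volume hmin zero_le_one hc
    (t := √p + x) (by positivity)
  rw [finrank_euclideanSpace_fin] at htail
  calc μ {θ | √p + x < ‖θ - θstar‖} ≤ μ {θ | √p + x ≤ ‖θ - θstar‖} :=
        measure_mono (ofPred_subset_ofPred.2 fun _ => le_of_lt)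
    _ ≤ _ := by rwa [hμ, Measure.smul_apply, withDensity_apply', smul_eq_mul]
    _ ≤ _ := ENNReal.ofReal_le_ofReal (one_add_div_sqrt_pow_mul_exp_le hp hx)
end

section
/- Let q : ℝ^p → (0, ∞) be a probability density with respect to Lebesgue measure such that −log q is 1-strongly convex, and let θ* be the (unique) minimizer of −log q, i.e., the mode of q. Then q(θ*) ≥ (2π)^{−p/2}. -/
open MeasureTheory Real

/-- **Lower bound on the density of a 1-strongly log-concave density at its mode.**
Let `q : ℝ^p → (0, ∞)` be a probability density with respect to Lebesgue measure such
that `−log q` is 1-strongly convex (i.e. `θ ↦ −log q(θ) − ‖θ‖²/2` is convex), and let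
`θ*` be the mode of `q` (the minimizer of `−log q`). Then `q(θ*) ≥ (2π)^{−p/2}`. -/
theorem stronglyLogConcave_density_at_mode_ge
    {p : ℕ} (q : EuclideanSpace ℝ (Fin p) → ℝ)
    (hpos : ∀ θ, 0 < q θ)
    (hdensity : ∫⁻ θ, ENNReal.ofReal (q θ) = 1)
    (hsc : ConvexOn ℝ Set.univ fun θ => -Real.log (q θ) - ‖θ‖ ^ 2 / 2)
    (θstar : EuclideanSpace ℝ (Fin p)) (hmode : ∀ θ, q θ ≤ q θstar) :
    (2 * Real.pi) ^ (-(p : ℝ) / 2) ≤ q θstar := by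
  -- norm identity
  have normid : ∀ (x y : EuclideanSpace ℝ (Fin p)) (t : ℝ),
      ‖(1 - t) • x + t • y‖ ^ 2
        = (1 - t) * ‖x‖ ^ 2 + t * ‖y‖ ^ 2 - t * (1 - t) * ‖x - y‖ ^ 2 := by
    intro x y t
    simp only [← real_inner_self_eq_norm_sq, inner_add_left, inner_add_right,
      inner_sub_left, inner_sub_right, real_inner_smul_left, real_inner_smul_right,
      real_inner_comm x y]
    ring
  -- pointwise bound
  have key : ∀ θ : EuclideanSpace ℝ (Fin p), q θ ≤ q θstar * rexp (-‖θ - θstar‖ ^ 2 / 2) := by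
    intro θ
    have hstep : ∀ t ∈ Set.Ioo (0 : ℝ) 1,
        (1 - t) * (‖θ - θstar‖ ^ 2 / 2) ≤ Real.log (q θstar) - Real.log (q θ) := by
      intro t ht
      have hcc := hsc.2 (Set.mem_univ θstar) (Set.mem_univ θ)
        (by linarith [ht.2] : (0 : ℝ) ≤ 1 - t) (le_of_lt ht.1) (by ring)
      have hlog : Real.log (q ((1 - t) • θstar + t • θ)) ≤ Real.log (q θstar) :=
        Real.log_le_log (hpos _) (hmode _)
      have hn := normid θstar θ t
      have hrev : ‖θstar - θ‖ = ‖θ - θstar‖ := norm_sub_rev _ _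
      simp only [hrev] at hn
      simp only [smul_eq_mul] at hcc
      nlinarith [hcc, hlog, hn, ht.1]
    have hlim : Filter.Tendsto (fun t : ℝ => (1 - t) * (‖θ - θstar‖ ^ 2 / 2))
        (nhdsWithin 0 (Set.Ioi 0)) (nhds (‖θ - θstar‖ ^ 2 / 2)) := by
      have : Filter.Tendsto (fun t : ℝ => (1 - t) * (‖θ - θstar‖ ^ 2 / 2))
          (nhds 0) (nhds ((1 - 0) * (‖θ - θstar‖ ^ 2 / 2))) :=
        ((continuous_const.sub continuous_id).mul continuous_const).tendsto 0
      simpa using this.mono_left nhdsWithin_le_nhds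
    have hfinal : ‖θ - θstar‖ ^ 2 / 2 ≤ Real.log (q θstar) - Real.log (q θ) := by
      refine le_of_tendsto hlim ?_
      filter_upwards [Ioo_mem_nhdsGT_of_mem (Set.left_mem_Ico.2 zero_lt_one)] with t ht
      exact hstep t ht
    calc q θ = rexp (Real.log (q θ)) := (Real.exp_log (hpos θ)).symm
      _ ≤ rexp (Real.log (q θstar) + (-‖θ - θstar‖ ^ 2 / 2)) := by
          apply Real.exp_le_exp.2; linarith
      _ = q θstar * rexp (-‖θ - θstar‖ ^ 2 / 2) := by
          rw [Real.exp_add, Real.exp_log (hpos θstar)]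
  -- integrability of Gaussian
  have hint0 : Integrable (fun v : EuclideanSpace ℝ (Fin p) => rexp (-(1 / 2 : ℝ) * ‖v‖ ^ 2)) := by
    have h := GaussianFourier.integrable_cexp_neg_mul_sq_norm_add (V := EuclideanSpace ℝ (Fin p)) (b := (1 / 2 : ℂ))
      (by norm_num) 0 (0 : EuclideanSpace ℝ (Fin p))
    have h2 := h.norm
    simpa [Complex.norm_exp, ← Complex.ofReal_pow] using h2
  have hint : Integrable (fun θ : EuclideanSpace ℝ (Fin p) => rexp (-‖θ - θstar‖ ^ 2 / 2)) := by
    have := hint0.comp_sub_right θstar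
    convert this using 2 with θ
    ring_nf
  -- value of Gaussian integral
  have hval : ∫ v : EuclideanSpace ℝ (Fin p), rexp (-(1 / 2 : ℝ) * ‖v‖ ^ 2)
      = (2 * Real.pi) ^ ((p : ℝ) / 2) := by
    rw [GaussianFourier.integral_rexp_neg_mul_sq_norm (by norm_num : (0 : ℝ) < 1 / 2),
      finrank_euclideanSpace_fin]
    congr 1
    ring
  have hval' : ∫ θ : EuclideanSpace ℝ (Fin p), rexp (-‖θ - θstar‖ ^ 2 / 2) = (2 * Real.pi) ^ ((p : ℝ) / 2) := by
    rw [← hval, ← integral_sub_right_eq_self (fun v : EuclideanSpace ℝ (Fin p) => rexp (-(1/2 : ℝ) * ‖v‖ ^ 2)) θstar]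
    congr 1 with θ
    ring_nf
  -- lintegral bound
  have hlin : (1 : ENNReal) ≤ ENNReal.ofReal (q θstar * (2 * Real.pi) ^ ((p : ℝ) / 2)) := by
    rw [← hdensity]
    calc ∫⁻ θ : EuclideanSpace ℝ (Fin p), ENNReal.ofReal (q θ)
        ≤ ∫⁻ θ : EuclideanSpace ℝ (Fin p), ENNReal.ofReal (q θstar * rexp (-‖θ - θstar‖ ^ 2 / 2)) :=
          lintegral_mono fun θ => ENNReal.ofReal_le_ofReal (key θ)
      _ = ∫⁻ θ : EuclideanSpace ℝ (Fin p), ENNReal.ofReal (q θstar) * ENNReal.ofReal (rexp (-‖θ - θstar‖ ^ 2 / 2)) := by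
          simp_rw [← ENNReal.ofReal_mul (le_of_lt (hpos θstar))]
      _ = ENNReal.ofReal (q θstar) * ∫⁻ θ : EuclideanSpace ℝ (Fin p), ENNReal.ofReal (rexp (-‖θ - θstar‖ ^ 2 / 2)) :=
          lintegral_const_mul' _ _ ENNReal.ofReal_ne_top
      _ = ENNReal.ofReal (q θstar) * ENNReal.ofReal ((2 * Real.pi) ^ ((p : ℝ) / 2)) := by
          rw [← MeasureTheory.ofReal_integral_eq_lintegral_ofReal hint
            (Filter.Eventually.of_forall fun θ => (Real.exp_pos _).le), hval']
      _ = ENNReal.ofReal (q θstar * (2 * Real.pi) ^ ((p : ℝ) / 2)) :=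
          (ENNReal.ofReal_mul (le_of_lt (hpos θstar))).symm
  have hreal : (1 : ℝ) ≤ q θstar * (2 * Real.pi) ^ ((p : ℝ) / 2) := by
    simpa using hlin
  have hpow : (0 : ℝ) < (2 * Real.pi) ^ ((p : ℝ) / 2) :=
    Real.rpow_pos_of_pos (by positivity) _
  have hprod : (2 * Real.pi) ^ (-(p : ℝ) / 2) * (2 * Real.pi) ^ ((p : ℝ) / 2) = 1 := by
    rw [← Real.rpow_add (by positivity), show (-(p:ℝ)/2 + (p:ℝ)/2) = 0 by ring,
      Real.rpow_zero]
  nlinarith [hreal, hpow, hprod, hpos θstar]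
end

section
/- Let k ≥ 2 and let X_1, …, X_k be random variables on a common probability space taking values in [−1, 1]. Suppose there is Δ ≥ 0 such that: (i) |E[X_i] − E[X_k]| ≤ Δ for all i; (ii) |E[X_i²] − E[X_k²]| ≤ Δ for all i; and (iii) |Cov(X_i, X_j)| ≤ Δ for all i ≠ j. Let μ̂ = (1/k) Σ_{i=1}^k X_i and let S = (1/(k−1)) Σ_{i=1}^k (X_i − μ̂)² be the sample variance. Then |E[S] − Var(X_k)| ≤ 4Δ. -/
/-!
Averaged over the ordered pairs `i ≠ j`, `(X_i - X_j)² / 2` is exactly the sample variance. For one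
such pair, `E[(X_i - X_j)²] / 2 - Var X_k` splits as
`(E X_i² - E X_k²) / 2 + (E X_j² - E X_k²) / 2 + (E[X_k]² - E X_i E X_j) - Cov(X_i, X_j)`,
and these four terms are at most `Δ/2`, `Δ/2`, `2Δ` and `Δ` in absolute value. Averaging keeps
the bound `4Δ`.
-/

open MeasureTheory ProbabilityTheory Finset
open scoped BigOperators

theorem sum_sum_sub_sq_eq {ι : Type*} [Fintype ι] (x : ι → ℝ) :
    ∑ i, ∑ j, (x i - x j) ^ 2
      = 2 * Fintype.card ι * ∑ i, (x i - (Fintype.card ι : ℝ)⁻¹ * ∑ j, x j) ^ 2 := by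
  rcases isEmpty_or_nonempty ι with _ | _
  · simp
  have hn : (Fintype.card ι : ℝ) ≠ 0 := by positivity
  simp only [sub_sq, sum_add_distrib, sum_sub_distrib, ← mul_sum, ← sum_mul, sum_const,
    card_univ, nsmul_eq_mul, mul_pow]
  field_simp
  ring

theorem abs_sq_sub_mul_le {a b c Δ : ℝ} (ha : |a| ≤ 1) (hc : |c| ≤ 1)
    (hba : |b - a| ≤ Δ) (hca : |c - a| ≤ Δ) : |a ^ 2 - b * c| ≤ 2 * Δ := by
  have key : a ^ 2 - b * c = a * (a - c) + c * (a - b) := by ring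
  calc |a ^ 2 - b * c| ≤ |a| * |a - c| + |c| * |a - b| := by
        rw [key, ← abs_mul, ← abs_mul]; exact abs_add_le _ _
    _ ≤ 1 * Δ + 1 * Δ := by
        rw [abs_sub_comm a c, abs_sub_comm a b]
        gcongr
    _ = 2 * Δ := by ring

theorem Finset.abs_expect_sub_le {ι α : Type*} [AddCommGroup α] [LinearOrder α]
    [IsOrderedAddMonoid α] [Module ℚ≥0 α] [PosSMulMono ℚ≥0 α] {s : Finset ι} {f : ι → α}
    {a ε : α} (hs : s.Nonempty) (h : ∀ i ∈ s, |f i - a| ≤ ε) : |𝔼 i ∈ s, f i - a| ≤ ε := by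
  rw [abs_sub_le_iff, sub_le_iff_le_add, sub_le_comm]
  exact ⟨expect_le hs fun i hi => sub_le_iff_le_add.1 (abs_sub_le_iff.1 (h i hi)).1,
    le_expect hs fun i hi => sub_le_comm.1 (abs_sub_le_iff.1 (h i hi)).2⟩

noncomputable def sampleVariance {k : ℕ} (x : Fin k → ℝ) : ℝ :=
  1 / ((k : ℝ) - 1) * ∑ i, (x i - 1 / (k : ℝ) * ∑ j, x j) ^ 2

theorem sampleVariance_eq_expect {k : ℕ} (x : Fin k → ℝ) :
    sampleVariance x = 𝔼 i, 𝔼 j ∈ univ.erase i, (x i - x j) ^ 2 / 2 := by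
  rcases Nat.eq_zero_or_pos k with rfl | hk
  · simp [sampleVariance]
  have inner : ∀ i, 𝔼 j ∈ univ.erase i, (x i - x j) ^ 2 / 2
      = (∑ j, (x i - x j) ^ 2) / (2 * ((k : ℝ) - 1)) := fun i => by
    rw [expect_eq_sum_div_card, card_erase_of_mem (mem_univ _), card_univ, Fintype.card_fin,
      sum_erase _ (by simp), ← sum_div, div_div, Nat.cast_sub hk, Nat.cast_one, mul_comm]
  have hk0 : (k : ℝ) ≠ 0 := by positivity
  simp_rw [inner, Fintype.expect_eq_sum_div_card, ← sum_div, sum_sum_sub_sq_eq,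
    Fintype.card_fin, sampleVariance]
  field_simp

namespace MeasureTheory

variable {Ω ι : Type*} [MeasurableSpace Ω] {μ : Measure Ω} {s : Finset ι} {f : ι → Ω → ℝ}

theorem integrable_finset_expect (hf : ∀ i ∈ s, Integrable (f i) μ) :
    Integrable (fun ω => 𝔼 i ∈ s, f i ω) μ := by
  simp_rw [expect_eq_sum_div_card]
  exact (integrable_finsetSum s hf).div_const _

theorem integral_finset_expect (hf : ∀ i ∈ s, Integrable (f i) μ) :
    ∫ ω, 𝔼 i ∈ s, f i ω ∂μ = 𝔼 i ∈ s, ∫ ω, f i ω ∂μ := by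
  simp_rw [expect_eq_sum_div_card]
  rw [integral_div, integral_finsetSum s hf]

end MeasureTheory

namespace ProbabilityTheory

variable {Ω : Type*} [MeasurableSpace Ω] {μ : Measure Ω} [IsProbabilityMeasure μ] {X Y : Ω → ℝ}

theorem integral_sub_sq (hX : MemLp X 2 μ) (hY : MemLp Y 2 μ) :
    ∫ ω, (X ω - Y ω) ^ 2 ∂μ
      = ∫ ω, X ω ^ 2 ∂μ + ∫ ω, Y ω ^ 2 ∂μ - 2 * (cov[X, Y; μ] + μ[X] * μ[Y]) := by
  have hXY : Integrable (fun ω => 2 * X ω * Y ω) μ := by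
    simpa only [Pi.mul_apply, mul_assoc] using (hX.integrable_mul hY).const_mul 2
  rw [covariance_eq_sub hX hY, sub_add_cancel]
  simp_rw [sub_sq]
  rw [integral_add (f := fun ω => X ω ^ 2 - 2 * X ω * Y ω) (hX.integrable_sq.sub hXY)
    hY.integrable_sq, integral_sub (f := fun ω => X ω ^ 2) hX.integrable_sq hXY]
  simp only [Pi.mul_apply, mul_assoc, integral_const_mul]
  ring

end ProbabilityTheory

theorem abs_expected_sample_variance_sub_variance_le_general
    {Ω : Type*} [MeasurableSpace Ω] (P : Measure Ω) [IsProbabilityMeasure P]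
    (k : ℕ) (hk : 2 ≤ k) (X : Fin k → Ω → ℝ)
    (hmeas : ∀ i, Measurable (X i))
    (hbdd : ∀ i ω, X i ω ∈ Set.Icc (-1 : ℝ) 1)
    (last : Fin k)
    (Δ : ℝ)
    (hmean : ∀ i, |(∫ ω, X i ω ∂P) - ∫ ω, X last ω ∂P| ≤ Δ)
    (hsecond : ∀ i, |(∫ ω, (X i ω) ^ 2 ∂P) - ∫ ω, (X last ω) ^ 2 ∂P| ≤ Δ)
    (hcov : ∀ i j, i ≠ j →
      |∫ ω, (X i ω - ∫ x, X i x ∂P) * (X j ω - ∫ x, X j x ∂P) ∂P| ≤ Δ) :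
    |(∫ ω, (1 / ((k : ℝ) - 1)) *
        ∑ i, (X i ω - (1 / (k : ℝ)) * ∑ j, X j ω) ^ 2 ∂P)
      - variance (X last) P| ≤ 4 * Δ := by
  have hL2 : ∀ i, MemLp (X i) 2 P :=
    fun i => memLp_of_bounded (.of_forall (hbdd i)) (hmeas i).aestronglyMeasurable 2
  have hmean_le : ∀ i, |∫ ω, X i ω ∂P| ≤ 1 := fun i => by
    have hX : ∀ᵐ ω ∂P, ‖X i ω‖ ≤ 1 := .of_forall fun ω => abs_le.2 (hbdd i ω)
    simpa using norm_integral_le_of_norm_le_const hX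
  have hsq : ∀ i j, Integrable (fun ω => (X i ω - X j ω) ^ 2 / 2) P :=
    fun i j => ((hL2 i).sub (hL2 j)).integrable_sq.div_const 2
  have hpair : ∀ i j, i ≠ j →
      |(∫ ω, (X i ω - X j ω) ^ 2 / 2 ∂P) - variance (X last) P| ≤ 4 * Δ := by
    intro i j hij
    have hc : |cov[X i, X j; P]| ≤ Δ := hcov i j hij
    have hm := abs_sq_sub_mul_le (hmean_le last) (hmean_le j) (hmean i) (hmean j)
    have hsi := hsecond i
    have hsj := hsecond j
    rw [integral_div, integral_sub_sq (hL2 i) (hL2 j), variance_eq_sub (hL2 last)]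
    simp only [Pi.pow_apply]
    rw [abs_le] at hc hm hsi hsj ⊢
    constructor <;> linarith
  have : Nontrivial (Fin k) := Fin.nontrivial_iff_two_le.2 hk
  change |∫ ω, sampleVariance (X · ω) ∂P - _| ≤ _
  simp_rw [sampleVariance_eq_expect]
  rw [integral_finset_expect fun i _ => integrable_finset_expect fun j _ => hsq i j]
  simp_rw [integral_finset_expect fun j _ => hsq _ j]
  exact abs_expect_sub_le univ_nonempty fun i _ =>
    abs_expect_sub_le univ_nontrivial.erase_nonempty fun j hj =>
      hpair i j (ne_of_mem_erase hj).symm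

/-- **The expected sample variance of nearly-identical, nearly-uncorrelated random
variables approximates the variance of the last one.** Let `k ≥ 2` and let
`X_1, …, X_k` be random variables taking values in `[−1, 1]` such that, for some `Δ ≥ 0`:
(i) `|E[X_i] − E[X_k]| ≤ Δ` for all `i`; (ii) `|E[X_i²] − E[X_k²]| ≤ Δ` for all `i`;
(iii) `|Cov(X_i, X_j)| ≤ Δ` for all `i ≠ j`. Then, for the sample variance
`S = (1/(k−1)) Σ_i (X_i − μ̂)²` with `μ̂ = (1/k) Σ_i X_i`, one has
`|E[S] − Var(X_k)| ≤ 4Δ`. -/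
theorem abs_expected_sample_variance_sub_variance_le
    {Ω : Type*} [MeasurableSpace Ω] (P : Measure Ω) [IsProbabilityMeasure P]
    (k : ℕ) (hk : 2 ≤ k) (X : Fin k → Ω → ℝ)
    (hmeas : ∀ i, Measurable (X i))
    (hbdd : ∀ i ω, X i ω ∈ Set.Icc (-1 : ℝ) 1)
    (last : Fin k) (hlast : (last : ℕ) = k - 1)
    (Δ : ℝ) (hΔ : 0 ≤ Δ)
    (hmean : ∀ i, |(∫ ω, X i ω ∂P) - ∫ ω, X last ω ∂P| ≤ Δ)
    (hsecond : ∀ i, |(∫ ω, (X i ω) ^ 2 ∂P) - ∫ ω, (X last ω) ^ 2 ∂P| ≤ Δ)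
    (hcov : ∀ i j, i ≠ j →
      |∫ ω, (X i ω - ∫ x, X i x ∂P) * (X j ω - ∫ x, X j x ∂P) ∂P| ≤ Δ) :
    |(∫ ω, (1 / ((k : ℝ) - 1)) *
        ∑ i, (X i ω - (1 / (k : ℝ)) * ∑ j, X j ω) ^ 2 ∂P)
      - variance (X last) P| ≤ 4 * Δ :=
  abs_expected_sample_variance_sub_variance_le_general P k hk X hmeas hbdd last Δ hmean hsecond hcov
end

section
/- Let μ be a probability measure on a measurable space 𝒳, let κ be a Markov kernel from 𝒳 to a measurable space 𝒴, and let ν be a probability measure on 𝒴. For every α > 1, the Rényi divergence between the joint measure μ ⊗ κ on 𝒳 × 𝒴 (with first marginal μ and conditional law κ) and the product measure μ × ν satisfies D_α(μ ⊗ κ ‖ μ × ν) ≤ ess sup_{x ∼ μ} D_α(κ(x) ‖ ν). -/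
/-!
Write `D = d(μ ⊗ κ)/d(μ × ν)`. Rather than identifying `D` with `(x, y) ↦ dκ(x)/dν (y)`, which
need not be jointly measurable unless `𝒴` is countably generated, bound it by duality: if `g ≤ D`
and `T = ∫ g^α d(μ × ν) < ∞`, then `T ≤ ∫ g^(α-1) d(μ ⊗ κ) = ∫∫ g(x, y)^(α-1) dκ(x) dμ`; Hölder
against `dκ(x)/dν` in `y` and Jensen for the concave power `t ↦ t^(1/q)` in `x`, where
`1/α + 1/q = 1`, give `T ≤ M^(1/α) T^(1/q)` with `M` an a.e. bound of `∫ (dκ(x)/dν)^α dν`.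
Hence `T ≤ M`, and monotone convergence along the truncations `g = min D n` yields
`∫ D^α d(μ × ν) ≤ M`.
-/

open MeasureTheory ProbabilityTheory

open scoped ENNReal

namespace ENNReal

lemma le_of_le_rpow_mul_rpow {p q : ℝ} (hpq : p.HolderConjugate q) {T M : ℝ≥0∞} (hT : T ≠ ⊤)
    (h : T ≤ M ^ (1 / p) * T ^ (1 / q)) : T ≤ M := by
  rcases eq_or_ne T 0 with rfl | hT0
  · exact zero_le
  have hp : 0 < 1 / p := one_div_pos.2 hpq.pos
  have hsplit : T = T ^ (1 / p) * T ^ (1 / q) := by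
    rw [← rpow_add _ _ hT0 hT, one_div, one_div, hpq.inv_add_inv_eq_one, rpow_one]
  have hq0 : T ^ (1 / q) ≠ 0 := (rpow_pos (pos_iff_ne_zero.2 hT0) hT).ne'
  have hqtop : T ^ (1 / q) ≠ ⊤ := rpow_ne_top_of_nonneg (one_div_pos.2 hpq.symm.pos).le hT
  exact (rpow_le_rpow_iff hp).1
    ((ENNReal.mul_le_mul_iff_left hq0 hqtop).1 (hsplit.symm.trans_le h))

lemma iSup_min_natCast_rpow (d : ℝ≥0∞) {p : ℝ} (hp : 0 < p) :
    ⨆ n : ℕ, min d n ^ p = d ^ p := by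
  have h := (orderIsoRpow p hp).map_iSup fun n : ℕ => min d n
  simp only [orderIsoRpow_apply] at h
  rw [← h, ← inf_iSup_eq, iSup_natCast, inf_top_eq]

end ENNReal

lemma lintegral_rpow_eq_iSup_min_natCast {α : Type*} [MeasurableSpace α] (μ : Measure α)
    {f : α → ℝ≥0∞} (hf : Measurable f) {p : ℝ} (hp : 0 < p) :
    ∫⁻ x, f x ^ p ∂μ = ⨆ n : ℕ, ∫⁻ x, min (f x) n ^ p ∂μ := by
  rw [← lintegral_iSup (fun n => (hf.min measurable_const).pow_const p) fun m n hmn x => by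
    dsimp only; gcongr]
  exact lintegral_congr fun x => (ENNReal.iSup_min_natCast_rpow _ hp).symm

lemma lintegral_rpow_le_rpow_lintegral {α : Type*} [MeasurableSpace α] (μ : Measure α)
    [IsProbabilityMeasure μ] {f : α → ℝ≥0∞} (hf : AEMeasurable f μ) {s : ℝ} (hs₀ : 0 ≤ s)
    (hs₁ : s ≤ 1) :
    ∫⁻ x, f x ^ s ∂μ ≤ (∫⁻ x, f x ∂μ) ^ s := by
  have := ENNReal.lintegral_mul_norm_pow_le (g := fun _ => 1) hf aemeasurable_const hs₀
    (sub_nonneg.2 hs₁) (add_sub_cancel s 1)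
  simpa only [ENNReal.one_rpow, mul_one, lintegral_const, measure_univ] using this

lemma lintegral_rnDeriv_mul_le {α : Type*} [MeasurableSpace α] (P Q : Measure α) {f : α → ℝ≥0∞}
    (hf : Measurable f) :
    ∫⁻ x, P.rnDeriv Q x * f x ∂Q ≤ ∫⁻ x, f x ∂P := by
  calc ∫⁻ x, P.rnDeriv Q x * f x ∂Q = ∫⁻ x, f x ∂(Q.withDensity (P.rnDeriv Q)) :=
        (lintegral_withDensity_eq_lintegral_mul _ (Measure.measurable_rnDeriv P Q) hf).symm
    _ ≤ ∫⁻ x, f x ∂P := lintegral_mono' (Measure.withDensity_rnDeriv_le P Q) le_rfl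

lemma lintegral_rpow_le_lintegral_rpow_sub_one_of_le_rnDeriv {α : Type*} [MeasurableSpace α]
    (P Q : Measure α) {g : α → ℝ≥0∞} (hg : Measurable g) (hgP : g ≤ P.rnDeriv Q) {p : ℝ}
    (hp : 1 ≤ p) :
    ∫⁻ x, g x ^ p ∂Q ≤ ∫⁻ x, g x ^ (p - 1) ∂P :=
  calc ∫⁻ x, g x ^ p ∂Q = ∫⁻ x, g x * g x ^ (p - 1) ∂Q := by
        refine lintegral_congr fun x => ?_
        have := ENNReal.rpow_add_of_nonneg (x := g x) 1 (p - 1) zero_le_one (sub_nonneg.2 hp)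
        rwa [add_sub_cancel, ENNReal.rpow_one] at this
    _ ≤ ∫⁻ x, P.rnDeriv Q x * g x ^ (p - 1) ∂Q := by gcongr with x; exact hgP x
    _ ≤ ∫⁻ x, g x ^ (p - 1) ∂P := lintegral_rnDeriv_mul_le P Q (hg.pow_const _)

lemma lintegral_rpow_sub_one_le_of_absolutelyContinuous {α : Type*} [MeasurableSpace α]
    {P Q : Measure α} [P.HaveLebesgueDecomposition Q] (hPQ : P ≪ Q) {p q : ℝ}
    (hpq : p.HolderConjugate q) {f : α → ℝ≥0∞} (hf : AEMeasurable f Q) :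
    ∫⁻ x, f x ^ (p - 1) ∂P ≤
      (∫⁻ x, P.rnDeriv Q x ^ p ∂Q) ^ (1 / p) * (∫⁻ x, f x ^ p ∂Q) ^ (1 / q) := by
  rw [← lintegral_rnDeriv_mul hPQ (hf.pow_const _)]
  exact ENNReal.lintegral_mul_rpow_le_lintegral_rpow_mul_lintegral_rpow hpq
    (Measure.measurable_rnDeriv P Q).aemeasurable hf

section CompProd

variable {𝓧 𝓨 : Type*} [MeasurableSpace 𝓧] [MeasurableSpace 𝓨]
  {μ : Measure 𝓧} [IsProbabilityMeasure μ] {κ : Kernel 𝓧 𝓨} [IsSFiniteKernel κ]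
  {ν : Measure 𝓨} [SigmaFinite ν] {p q : ℝ} {M : ℝ≥0∞}

lemma lintegral_rpow_le_of_le_rnDeriv_compProd (hpq : p.HolderConjugate q)
    (h_ac : ∀ᵐ x ∂μ, κ x ≪ ν) (hM : ∀ᵐ x ∂μ, ∫⁻ y, (κ x).rnDeriv ν y ^ p ∂ν ≤ M)
    {g : 𝓧 × 𝓨 → ℝ≥0∞} (hg : Measurable g) (hg_le : g ≤ (μ ⊗ₘ κ).rnDeriv (μ.prod ν))
    (hg_fin : ∫⁻ z, g z ^ p ∂(μ.prod ν) ≠ ⊤) :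
    ∫⁻ z, g z ^ p ∂(μ.prod ν) ≤ M := by
  refine ENNReal.le_of_le_rpow_mul_rpow hpq hg_fin ?_
  have hφ : Measurable fun x => ∫⁻ y, g (x, y) ^ p ∂ν := (hg.pow_const p).lintegral_prod_right'
  calc ∫⁻ z, g z ^ p ∂(μ.prod ν) ≤ ∫⁻ z, g z ^ (p - 1) ∂(μ ⊗ₘ κ) :=
        lintegral_rpow_le_lintegral_rpow_sub_one_of_le_rnDeriv _ _ hg hg_le hpq.lt.le
    _ = ∫⁻ x, ∫⁻ y, g (x, y) ^ (p - 1) ∂(κ x) ∂μ := Measure.lintegral_compProd (hg.pow_const _)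
    _ ≤ ∫⁻ x, M ^ (1 / p) * (∫⁻ y, g (x, y) ^ p ∂ν) ^ (1 / q) ∂μ := by
        refine lintegral_mono_ae ?_
        filter_upwards [h_ac, hM] with x hx hMx
        exact (lintegral_rpow_sub_one_le_of_absolutelyContinuous hx hpq
          (hg.comp measurable_prodMk_left).aemeasurable).trans
          (mul_le_mul' (ENNReal.rpow_le_rpow hMx (one_div_pos.2 hpq.pos).le) le_rfl)
    _ = M ^ (1 / p) * ∫⁻ x, (∫⁻ y, g (x, y) ^ p ∂ν) ^ (1 / q) ∂μ :=
        lintegral_const_mul _ (hφ.pow_const _)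
    _ ≤ M ^ (1 / p) * (∫⁻ x, ∫⁻ y, g (x, y) ^ p ∂ν ∂μ) ^ (1 / q) :=
        mul_le_mul' le_rfl (lintegral_rpow_le_rpow_lintegral μ hφ.aemeasurable
          (one_div_pos.2 hpq.symm.pos).le ((div_le_one hpq.symm.pos).2 hpq.symm.lt.le))
    _ = M ^ (1 / p) * (∫⁻ z, g z ^ p ∂(μ.prod ν)) ^ (1 / q) := by
        rw [lintegral_prod _ (hg.pow_const p).aemeasurable]

lemma lintegral_rnDeriv_compProd_rpow_le [IsFiniteMeasure ν] (hpq : p.HolderConjugate q)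
    (h_ac : ∀ᵐ x ∂μ, κ x ≪ ν) (hM : ∀ᵐ x ∂μ, ∫⁻ y, (κ x).rnDeriv ν y ^ p ∂ν ≤ M) :
    ∫⁻ z, (μ ⊗ₘ κ).rnDeriv (μ.prod ν) z ^ p ∂(μ.prod ν) ≤ M := by
  have hD := Measure.measurable_rnDeriv (μ ⊗ₘ κ) (μ.prod ν)
  rw [lintegral_rpow_eq_iSup_min_natCast _ hD hpq.pos]
  refine iSup_le fun n => lintegral_rpow_le_of_le_rnDeriv_compProd hpq h_ac hM
    (hD.min measurable_const) (fun z => min_le_left _ _) (ne_top_of_le_ne_top ?_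
      (lintegral_mono fun z => ENNReal.rpow_le_rpow (min_le_right _ _) hpq.pos.le))
  rw [lintegral_const]
  exact ENNReal.mul_ne_top (ENNReal.rpow_ne_top_of_nonneg hpq.pos.le (ENNReal.natCast_ne_top n))
    (measure_ne_top _ _)

end CompProd

section Renyi

variable {Ω : Type*} [MeasurableSpace Ω] {P Q : Measure Ω} {a : ℝ}

lemma absolutelyContinuous_of_renyiDiv_ne_top (h : renyiDiv a P Q ≠ ⊤) : P ≪ Q := by
  by_contra hPQ
  exact h (if_neg hPQ)

lemma renyiDiv_le_iff (ha : 1 < a) (hPQ : P ≪ Q) {L : EReal} :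
    renyiDiv a P Q ≤ L ↔ ∫⁻ x, P.rnDeriv Q x ^ a ∂Q ≤ EReal.exp ((a - 1 : ℝ) * L) := by
  have hc : (0 : EReal) < (a - 1 : ℝ) := by exact_mod_cast sub_pos.2 ha
  rw [renyiDiv, if_pos hPQ, ← ENNReal.log_le_log_iff, EReal.log_exp, EReal.coe_inv, mul_comm,
    ← div_eq_mul_inv, EReal.div_le_iff_le_mul hc (EReal.coe_ne_top _)]

end Renyi

/-- **Conditional (essential supremum) bound for the Rényi divergence of a joint measure
against a product measure.** For a probability measure `μ` on `𝒳`, a Markov kernel `κ`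
from `𝒳` to `𝒴` and a probability measure `ν` on `𝒴`, for every `α > 1`,
`D_α(μ ⊗ κ ‖ μ × ν) ≤ ess sup_{x ∼ μ} D_α(κ(x) ‖ ν)`. -/
theorem renyiDiv_compProd_le_essSup
    {𝓧 𝓨 : Type*} [MeasurableSpace 𝓧] [MeasurableSpace 𝓨]
    (μ : Measure 𝓧) [IsProbabilityMeasure μ]
    (κ : Kernel 𝓧 𝓨) [IsMarkovKernel κ]
    (ν : Measure 𝓨) [IsProbabilityMeasure ν]
    (a : ℝ) (ha : 1 < a) :
    renyiDiv a (μ ⊗ₘ κ) (μ.prod ν) ≤ essSup (fun x => renyiDiv a (κ x) ν) μ := by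
  set L := essSup (fun x => renyiDiv a (κ x) ν) μ
  rcases eq_or_ne L ⊤ with hL | hL
  · exact hL ▸ le_top
  have h_ae : ∀ᵐ x ∂μ, renyiDiv a (κ x) ν ≤ L := ae_le_essSup
  have h_ac : ∀ᵐ x ∂μ, κ x ≪ ν := h_ae.mono fun x hx =>
    absolutelyContinuous_of_renyiDiv_ne_top (ne_top_of_le_ne_top hL hx)
  have h_ac' : μ ⊗ₘ κ ≪ μ.prod ν := by
    simpa only [Measure.compProd_const] using
      Measure.AbsolutelyContinuous.compProd_right (η := Kernel.const 𝓧 ν) h_ac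
  rw [renyiDiv_le_iff ha h_ac']
  refine lintegral_rnDeriv_compProd_rpow_le (Real.HolderConjugate.conjExponent ha) h_ac ?_
  filter_upwards [h_ae, h_ac] with x hx hxν
  exact (renyiDiv_le_iff ha hxν).1 hx
end

section
/- Let X be a random variable with law μ on a measurable space 𝒳, let κ be a Markov kernel from 𝒳 to a measurable space 𝒴, and let Y be a random variable whose conditional law given X = x is κ(x). Let f : 𝒳 → [−1, 1] and g : 𝒴 → [−1, 1] be measurable, and suppose there are a probability measure ν on 𝒴 and ε ≥ 0 such that D_2(κ(x) ‖ ν) ≤ ε for μ-almost every x. Then |Cov(f(X), g(Y))| ≤ 2√(e^{ε} − 1). -/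
open MeasureTheory ProbabilityTheory

/-!
Write `h x = ∫ g ∂κ x`. Disintegrating the law `μ ⊗ κ` of `(X, Y)` turns `Cov(f(X), g(Y))` into
`Cov_μ(f, h)`, which Cauchy–Schwarz bounds by `√Var f · √Var h ≤ √Var h`. For each `x`,
`h x - ∫ g ∂ν` is the covariance under `ν` of the density `dκ(x)/dν` with `g`, so Cauchy–Schwarz
bounds it by `√(χ²(κ(x)‖ν))`, and `1 + χ²(κ(x)‖ν) = ∫ (dκ(x)/dν)² dν = exp D₂(κ(x)‖ν) ≤ e^ε`.
Thus `h` stays within `√(e^ε − 1)` of a constant `μ`-a.e., and Popoviciu's inequality bounds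
`√Var h` by the same quantity; the factor `2` is not even needed.
-/

open scoped ENNReal

namespace MeasureTheory

variable {α : Type*} {mα : MeasurableSpace α}

theorem abs_integral_mul_le_sqrt_mul_sqrt {μ : Measure α} {u v : α → ℝ}
    (hu : MemLp u 2 μ) (hv : MemLp v 2 μ) :
    |∫ x, u x * v x ∂μ| ≤ √(∫ x, u x ^ 2 ∂μ) * √(∫ x, v x ^ 2 ∂μ) := by
  have hnorm_rpow (w : α → ℝ) : (fun x => ‖w x‖ ^ (2 : ℝ)) = fun x => w x ^ 2 := by
    ext x; rw [Real.rpow_two, Real.norm_eq_abs, sq_abs]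
  have h2 : ENNReal.ofReal 2 = 2 := by norm_num
  calc |∫ x, u x * v x ∂μ| ≤ ∫ x, ‖u x‖ * ‖v x‖ ∂μ := by
        simpa only [Real.norm_eq_abs, abs_mul] using
          abs_integral_le_integral_abs (f := fun x => u x * v x)
    _ ≤ (∫ x, ‖u x‖ ^ (2 : ℝ) ∂μ) ^ (1 / (2 : ℝ)) * (∫ x, ‖v x‖ ^ (2 : ℝ) ∂μ) ^ (1 / (2 : ℝ)) :=
        integral_mul_norm_le_Lp_mul_Lq .two_two (h2 ▸ hu) (h2 ▸ hv)
    _ = √(∫ x, u x ^ 2 ∂μ) * √(∫ x, v x ^ 2 ∂μ) := by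
        simp only [hnorm_rpow, Real.sqrt_eq_rpow]

end MeasureTheory

namespace ProbabilityTheory

variable {α β : Type*} {mα : MeasurableSpace α} {mβ : MeasurableSpace β}

section Variance

variable {μ : Measure α}

theorem abs_covariance_le_sqrt_variance_mul [IsFiniteMeasure μ] {X Y : α → ℝ}
    (hX : MemLp X 2 μ) (hY : MemLp Y 2 μ) :
    |cov[X, Y; μ]| ≤ √Var[X; μ] * √Var[Y; μ] := by
  rw [covariance, variance_eq_integral hX.aemeasurable, variance_eq_integral hY.aemeasurable]
  exact abs_integral_mul_le_sqrt_mul_sqrt (hX.sub (memLp_const _)) (hY.sub (memLp_const _))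

theorem sqrt_variance_le_of_mem_Icc [IsProbabilityMeasure μ] {X : α → ℝ}
    (hX : AEMeasurable X μ) {a b : ℝ} (h : ∀ᵐ x ∂μ, X x ∈ Set.Icc a b) :
    √Var[X; μ] ≤ (b - a) / 2 := by
  obtain ⟨x, hax, hxb⟩ := h.exists
  exact (Real.sqrt_le_sqrt (variance_le_sq_of_bounded h hX)).trans_eq
    (Real.sqrt_sq (by linarith))

theorem covariance_compProd_fst_snd [IsProbabilityMeasure μ]
    {κ : Kernel α β} [IsMarkovKernel κ] {f : α → ℝ} {g : β → ℝ} (hf : MemLp f 2 μ)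
    (hg : MemLp (fun z : α × β => g z.2) 2 (μ ⊗ₘ κ)) :
    cov[fun z => f z.1, fun z => g z.2; μ ⊗ₘ κ] = cov[f, fun x => ∫ y, g y ∂κ x; μ] := by
  have hfst : MeasurePreserving Prod.fst (μ ⊗ₘ κ) μ := ⟨measurable_fst, Measure.fst_compProd μ κ⟩
  have hf' : MemLp (fun z : α × β => f z.1) 2 (μ ⊗ₘ κ) := hf.comp_measurePreserving hfst
  have hg_int : Integrable (fun z : α × β => g z.2) (μ ⊗ₘ κ) := hg.integrable one_le_two
  have hg_int_ae : ∀ᵐ x ∂μ, Integrable g (κ x) :=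
    ((Measure.integrable_compProd_iff hg_int.aestronglyMeasurable).1 hg_int).1
  have hmean_f : ∫ z, f z.1 ∂(μ ⊗ₘ κ) = ∫ x, f x ∂μ := by
    simp [Measure.integral_compProd (hf'.integrable one_le_two)]
  have hmean_g : ∫ z, g z.2 ∂(μ ⊗ₘ κ) = ∫ x, ∫ y, g y ∂κ x ∂μ :=
    Measure.integral_compProd hg_int
  have hprod_int : Integrable (fun z : α × β => (f z.1 - ∫ x, f x ∂μ) *
      (g z.2 - ∫ x, ∫ y, g y ∂κ x ∂μ)) (μ ⊗ₘ κ) :=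
    (hf'.sub (memLp_const _)).integrable_mul (hg.sub (memLp_const _))
  unfold covariance
  rw [hmean_f, hmean_g, Measure.integral_compProd hprod_int]
  refine integral_congr_ae ?_
  filter_upwards [hg_int_ae] with x hgx
  rw [integral_const_mul, integral_sub hgx (integrable_const _), integral_const]
  simp

theorem covariance_comp_eq_of_map_eq_compProd {Ω : Type*} {mΩ : MeasurableSpace Ω}
    {P : Measure Ω} [IsProbabilityMeasure P] [IsProbabilityMeasure μ]
    {κ : Kernel α β} [IsMarkovKernel κ] {X : Ω → α} {Y : Ω → β} (hX : Measurable X)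
    (hY : Measurable Y) (hXY : P.map (fun ω => (X ω, Y ω)) = μ ⊗ₘ κ)
    {f : α → ℝ} {g : β → ℝ} (hf : MemLp f 2 μ) (hg : MemLp (fun z : α × β => g z.2) 2 (μ ⊗ₘ κ)) :
    cov[fun ω => f (X ω), fun ω => g (Y ω); P] = cov[f, fun x => ∫ y, g y ∂κ x; μ] := by
  have hf' : MemLp (fun z : α × β => f z.1) 2 (μ ⊗ₘ κ) :=
    hf.comp_measurePreserving ⟨measurable_fst, Measure.fst_compProd μ κ⟩
  rw [← covariance_compProd_fst_snd hf hg, ← hXY]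
  exact (covariance_map_fun (hXY ▸ hf'.aestronglyMeasurable) (hXY ▸ hg.aestronglyMeasurable)
    (hX.prodMk hY).aemeasurable).symm

end Variance

section RadonNikodym

variable {p q : Measure β}

theorem memLp_two_toReal_rnDeriv (h : ∫⁻ y, p.rnDeriv q y ^ 2 ∂q ≠ ∞) :
    MemLp (fun y => (p.rnDeriv q y).toReal) 2 q := by
  have hm := p.measurable_rnDeriv q
  refine (memLp_two_iff_integrable_sq hm.ennreal_toReal.aestronglyMeasurable).2 ?_
  simpa only [ENNReal.toReal_pow] using
    integrable_toReal_of_lintegral_ne_top (hm.pow_const 2).aemeasurable h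

variable [IsProbabilityMeasure p] [IsProbabilityMeasure q]

theorem integral_toReal_rnDeriv_eq_one (hpq : p ≪ q) :
    ∫ y, (p.rnDeriv q y).toReal ∂q = 1 := by
  simp [Measure.integral_toReal_rnDeriv hpq]

theorem variance_toReal_rnDeriv (hpq : p ≪ q) (h : ∫⁻ y, p.rnDeriv q y ^ 2 ∂q ≠ ∞) :
    Var[fun y => (p.rnDeriv q y).toReal; q] = (∫⁻ y, p.rnDeriv q y ^ 2 ∂q).toReal - 1 := by
  have hm := p.measurable_rnDeriv q
  rw [variance_eq_sub (memLp_two_toReal_rnDeriv h), integral_toReal_rnDeriv_eq_one hpq,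
    ← integral_toReal (hm.pow_const 2).aemeasurable
      ((p.rnDeriv_lt_top q).mono fun y hy => ENNReal.pow_lt_top hy)]
  simp [ENNReal.toReal_pow]

theorem integral_sub_integral_eq_covariance_toReal_rnDeriv (hpq : p ≪ q) {g : β → ℝ}
    (hr : MemLp (fun y => (p.rnDeriv q y).toReal) 2 q) (hg : MemLp g 2 q) :
    ∫ y, g y ∂p - ∫ y, g y ∂q = cov[fun y => (p.rnDeriv q y).toReal, g; q] := by
  rw [covariance_eq_sub hr hg, integral_toReal_rnDeriv_eq_one hpq, one_mul,
    ← integral_rnDeriv_smul hpq]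
  rfl

end RadonNikodym

section Renyi

variable {p q : Measure β}

theorem absolutelyContinuous_of_renyiDiv_ne_top {a : ℝ} (h : renyiDiv a p q ≠ ⊤) : p ≪ q := by
  by_contra hpq
  exact h (if_neg hpq)

theorem lintegral_rnDeriv_rpow_le_of_renyiDiv_le {a ε : ℝ} (ha : 1 < a)
    (h : renyiDiv a p q ≤ ε) :
    ∫⁻ y, p.rnDeriv q y ^ a ∂q ≤ ENNReal.ofReal (Real.exp ((a - 1) * ε)) := by
  have hpq := absolutelyContinuous_of_renyiDiv_ne_top (ne_top_of_le_ne_top (EReal.coe_ne_top ε) h)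
  rw [renyiDiv, if_pos hpq, EReal.coe_inv, ← EReal.div_eq_inv_mul,
    EReal.div_le_iff_le_mul (by exact_mod_cast sub_pos.2 ha) (EReal.coe_ne_top _),
    ← EReal.coe_mul] at h
  rwa [← ENNReal.log_le_log_iff, ENNReal.log_ofReal_of_pos (Real.exp_pos _), Real.log_exp]

theorem lintegral_rnDeriv_sq_le_of_renyiDiv_two_le {ε : ℝ} (h : renyiDiv 2 p q ≤ ε) :
    ∫⁻ y, p.rnDeriv q y ^ 2 ∂q ≤ ENNReal.ofReal (Real.exp ε) := by
  simpa only [ENNReal.rpow_two, show (2 : ℝ) - 1 = 1 by norm_num, one_mul] using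
    lintegral_rnDeriv_rpow_le_of_renyiDiv_le one_lt_two h

theorem abs_integral_sub_integral_le_of_renyiDiv_two_le
    [IsProbabilityMeasure p] [IsProbabilityMeasure q] {ε : ℝ} (h : renyiDiv 2 p q ≤ ε)
    {g : β → ℝ} (hg : MemLp g 2 q) :
    |∫ y, g y ∂p - ∫ y, g y ∂q| ≤ √(Real.exp ε - 1) * √Var[g; q] := by
  have hpq := absolutelyContinuous_of_renyiDiv_ne_top (ne_top_of_le_ne_top (EReal.coe_ne_top ε) h)
  have hL := lintegral_rnDeriv_sq_le_of_renyiDiv_two_le h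
  have hL_ne_top := ne_top_of_le_ne_top ENNReal.ofReal_ne_top hL
  have hr := memLp_two_toReal_rnDeriv hL_ne_top
  rw [integral_sub_integral_eq_covariance_toReal_rnDeriv hpq hr hg]
  calc _ ≤ √Var[fun y => (p.rnDeriv q y).toReal; q] * √Var[g; q] :=
        abs_covariance_le_sqrt_variance_mul hr hg
    _ ≤ √(Real.exp ε - 1) * √Var[g; q] := by
        gcongr
        rw [variance_toReal_rnDeriv hpq hL_ne_top]
        linarith [ENNReal.toReal_le_of_le_ofReal (Real.exp_pos ε).le hL]

end Renyi

end ProbabilityTheory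

theorem abs_cov_le_of_renyiDiv_le_general
    {Ω 𝓧 𝓨 : Type*} [MeasurableSpace Ω] [MeasurableSpace 𝓧] [MeasurableSpace 𝓨]
    (P : Measure Ω) [IsProbabilityMeasure P]
    (X : Ω → 𝓧) (hX : Measurable X) (Y : Ω → 𝓨) (hY : Measurable Y)
    (μ : Measure 𝓧) (hμ : μ = P.map X)
    (κ : Kernel 𝓧 𝓨) [IsMarkovKernel κ]
    (hjoint : P.map (fun ω => (X ω, Y ω)) = μ ⊗ₘ κ)
    (f : 𝓧 → ℝ) (hf : Measurable f) (hf1 : ∀ x, f x ∈ Set.Icc (-1 : ℝ) 1)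
    (g : 𝓨 → ℝ) (hg : Measurable g) (hg1 : ∀ y, g y ∈ Set.Icc (-1 : ℝ) 1)
    (ν : Measure 𝓨) [IsProbabilityMeasure ν]
    (ε : ℝ)
    (hdiv : ∀ᵐ x ∂μ, renyiDiv 2 (κ x) ν ≤ (ε : EReal)) :
    |∫ ω, (f (X ω) - ∫ ω', f (X ω') ∂P) * (g (Y ω) - ∫ ω', g (Y ω') ∂P) ∂P|
      ≤ 2 * Real.sqrt (Real.exp ε - 1) := by
  have : IsProbabilityMeasure μ := hμ ▸ Measure.isProbabilityMeasure_map hX.aemeasurable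
  set s := √(Real.exp ε - 1)
  set h := fun x => ∫ y, g y ∂κ x
  have hg_var : √Var[g; ν] ≤ 1 := by
    simpa using sqrt_variance_le_of_mem_Icc hg.aemeasurable (.of_forall hg1)
  have hh_mem : ∀ᵐ x ∂μ, h x ∈ Set.Icc ((∫ y, g y ∂ν) - s) ((∫ y, g y ∂ν) + s) := by
    filter_upwards [hdiv] with x hx
    rw [← Set.mem_Icc_iff_abs_le, abs_sub_comm]
    calc _ ≤ s * √Var[g; ν] := abs_integral_sub_integral_le_of_renyiDiv_two_le hx
          (memLp_of_bounded (.of_forall hg1) hg.aestronglyMeasurable 2)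
      _ ≤ s := mul_le_of_le_one_right (Real.sqrt_nonneg _) hg_var
  have hh : Measurable h := (hg.stronglyMeasurable.integral_kernel (κ := κ)).measurable
  have hf2 : MemLp f 2 μ := memLp_of_bounded (.of_forall hf1) hf.aestronglyMeasurable 2
  show |cov[fun ω => f (X ω), fun ω => g (Y ω); P]| ≤ 2 * s
  rw [covariance_comp_eq_of_map_eq_compProd hX hY hjoint hf2 (memLp_of_bounded
    (.of_forall fun z : 𝓧 × 𝓨 => hg1 z.2) (hg.comp measurable_snd).aestronglyMeasurable 2)]
  calc |cov[f, h; μ]| ≤ √Var[f; μ] * √Var[h; μ] :=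
        abs_covariance_le_sqrt_variance_mul hf2
          (memLp_of_bounded hh_mem hh.aestronglyMeasurable 2)
    _ ≤ 1 * s := by
        gcongr
        · simpa using sqrt_variance_le_of_mem_Icc hf.aemeasurable (.of_forall hf1)
        · simpa using sqrt_variance_le_of_mem_Icc hh.aemeasurable hh_mem
    _ ≤ 2 * s := by gcongr; norm_num

/-- **Near pairwise independence from conditional closeness in Rényi divergence.**
Let `X` be a random variable with law `μ`, let `κ` be a Markov kernel, and let `Y` have
conditional law `κ(x)` given `X = x` (i.e. the law of `(X, Y)` is `μ ⊗ κ`). Let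
`f : 𝒳 → [−1,1]` and `g : 𝒴 → [−1,1]` be measurable, and suppose there are a probability
measure `ν` and `ε ≥ 0` such that `D₂(κ(x)‖ν) ≤ ε` for `μ`-almost every `x`. Then
`|Cov(f(X), g(Y))| ≤ 2√(e^ε − 1)`. -/
theorem abs_cov_le_of_renyiDiv_le
    {Ω 𝓧 𝓨 : Type*} [MeasurableSpace Ω] [MeasurableSpace 𝓧] [MeasurableSpace 𝓨]
    (P : Measure Ω) [IsProbabilityMeasure P]
    (X : Ω → 𝓧) (hX : Measurable X) (Y : Ω → 𝓨) (hY : Measurable Y)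
    (μ : Measure 𝓧) (hμ : μ = P.map X)
    (κ : Kernel 𝓧 𝓨) [IsMarkovKernel κ]
    (hjoint : P.map (fun ω => (X ω, Y ω)) = μ ⊗ₘ κ)
    (f : 𝓧 → ℝ) (hf : Measurable f) (hf1 : ∀ x, f x ∈ Set.Icc (-1 : ℝ) 1)
    (g : 𝓨 → ℝ) (hg : Measurable g) (hg1 : ∀ y, g y ∈ Set.Icc (-1 : ℝ) 1)
    (ν : Measure 𝓨) [IsProbabilityMeasure ν]
    (ε : ℝ) (hε : 0 ≤ ε)
    (hdiv : ∀ᵐ x ∂μ, renyiDiv 2 (κ x) ν ≤ (ε : EReal)) :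
    |∫ ω, (f (X ω) - ∫ ω', f (X ω') ∂P) * (g (Y ω) - ∫ ω', g (Y ω') ∂P) ∂P|
      ≤ 2 * Real.sqrt (Real.exp ε - 1) :=
  abs_cov_le_of_renyiDiv_le_general P X hX Y hY μ hμ κ hjoint f hf hf1 g hg hg1 ν ε hdiv
end
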